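/- arXiv:2404.10759 — 4 statements merged into one kernel-verified Lean document; each statement's English description precedes it below -/
import Mathlib

section
/- Under the setup of binary HDC encoding with a trace-orthogonal family of permutations P = {Π_1, ..., Π_d} and hypervectors v_1, ..., v_m satisfying E[v_i(k) v_j(k)] = K(i,j) with entries at distinct coordinates independent, the encoding ψ_x = ⊙_{i=1}^d Π_i v_{x(i)} satisfies E[ψ_x^T ψ_y / N] = ∏_{i=1}^d K(x(i), y(i)) for all x, y ∈ {1,...,m}^d. -/
open MeasureTheory ProbabilityTheory

section Aux

variable {Ω : Type*} {mΩ : MeasurableSpace Ω} {μ : Measure Ω}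

/-- Reindexing an independent family of functions along an injective map. -/
lemma iIndepFun_precomp_of_injective {ι ι' : Type*} {β : Type*} [mβ : MeasurableSpace β]
    {f : ι' → Ω → β} (hf : iIndepFun f μ) {g : ι → ι'}
    (hg : Function.Injective g) :
    iIndepFun (fun i => f (g i)) μ := by
  classical
  rw [iIndepFun_iff_measure_inter_preimage_eq_mul] at hf ⊢
  intro S sets hsets
  set sets' : ι' → Set β := fun k => ⋂ i ∈ S.filter (fun j => g j = k), sets i with hsets'
  have hmeas' : ∀ k, k ∈ S.image g → MeasurableSet (sets' k) := by
    intro k _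
    exact Finset.measurableSet_biInter _ (fun i hi => hsets i (Finset.mem_filter.1 hi).1)
  have hkey : ∀ i ∈ S, sets' (g i) = sets i := by
    intro i hi
    have : S.filter (fun j => g j = g i) = {i} := by
      ext j
      simp only [Finset.mem_filter, Finset.mem_singleton]
      constructor
      · rintro ⟨_, hj⟩; exact hg hj
      · rintro rfl; exact ⟨hi, rfl⟩
    show (⋂ j ∈ S.filter (fun j => g j = g i), sets j) = sets i
    rw [this]; simp
  have h1 : (⋂ k ∈ S.image g, f k ⁻¹' sets' k) = ⋂ i ∈ S, f (g i) ⁻¹' sets i := by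
    ext ω
    simp only [Set.mem_iInter, Finset.mem_image]
    constructor
    · intro h i hi
      rw [← hkey i hi]
      exact h (g i) ⟨i, hi, rfl⟩
    · rintro h k ⟨i, hi, rfl⟩
      rw [hkey i hi]
      exact h i hi
  have h2 : ∏ k ∈ S.image g, μ (f k ⁻¹' sets' k) = ∏ i ∈ S, μ (f (g i) ⁻¹' sets i) := by
    rw [Finset.prod_image (fun a _ b _ h => hg h)]
    exact Finset.prod_congr rfl fun i hi => by rw [hkey i hi]
  rw [← h1, ← h2]
  exact hf (S.image g) hmeas'

/-- Integral of a product of independent, measurable, bounded-by-one real random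
variables equals the product of integrals. -/
lemma integral_prod_of_iIndepFun {ι : Type*} [IsProbabilityMeasure μ] {f : ι → Ω → ℝ}
    (hf : iIndepFun f μ) (hmeas : ∀ i, Measurable (f i))
    (hbd : ∀ i ω, |f i ω| ≤ 1) (s : Finset ι) :
    ∫ ω, ∏ i ∈ s, f i ω ∂μ = ∏ i ∈ s, ∫ ω, f i ω ∂μ := by
  classical
  have hint : ∀ i, Integrable (f i) μ := fun i =>
    (integrable_const (1:ℝ)).mono' (hmeas i).aestronglyMeasurable
      (Filter.Eventually.of_forall fun ω => by
        simpa [Real.norm_eq_abs] using hbd i ω)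
  induction s using Finset.induction_on with
  | empty => simp
  | insert a s hi ih =>
    have hintprod : Integrable (fun ω => ∏ i ∈ s, f i ω) μ := by
      refine (integrable_const (1:ℝ)).mono'
        ((Finset.measurable_prod s (fun i _ => hmeas i)).aestronglyMeasurable)
        (Filter.Eventually.of_forall fun ω => ?_)
      rw [Real.norm_eq_abs, Finset.abs_prod]
      calc ∏ i ∈ s, |f i ω| ≤ ∏ i ∈ s, 1 :=
            Finset.prod_le_prod (fun i _ => abs_nonneg _) (fun i _ => hbd i ω)
        _ = 1 := Finset.prod_const_one
    have hIndep : IndepFun (∏ j ∈ s, f j) (f a) μ :=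
      hf.indepFun_finsetProd_of_notMem hmeas hi
    have : ∫ ω, (∏ j ∈ s, f j) ω * f a ω ∂μ =
        (∫ ω, (∏ j ∈ s, f j) ω ∂μ) * ∫ ω, f a ω ∂μ := by
      refine hIndep.integral_mul_eq_mul_integral ?_ (hint a).aestronglyMeasurable
      have hfn : (∏ j ∈ s, f j) = fun ω => ∏ j ∈ s, f j ω := by
        funext ω; exact Finset.prod_apply ω s f
      rw [hfn]; exact hintprod.aestronglyMeasurable
    simp only [Finset.prod_apply] at this
    simp only [Finset.prod_insert hi]
    rw [← ih]
    calc ∫ ω, f a ω * ∏ i ∈ s, f i ω ∂μ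
        = ∫ ω, (∏ i ∈ s, f i ω) * f a ω ∂μ := by simp_rw [mul_comm]
      _ = (∫ ω, ∏ i ∈ s, f i ω ∂μ) * ∫ ω, f a ω ∂μ := this
      _ = (∫ ω, f a ω ∂μ) * ∫ ω, ∏ i ∈ s, f i ω ∂μ := mul_comm _ _

end Aux

/-- Expected similarity of HDC binding encodings: with a trace-orthogonal
family of permutations `σ_1, …, σ_d` of the `N` coordinates (no two agree at
any coordinate), random `±1` hypervectors `v_1, …, v_m` whose coordinates are
independent across distinct indices `k` and satisfy `E[v_i(k) v_j(k)] = K(i,j)`,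
the encoding `ψ_x(k) = ∏_i v_{x(i)}(σ_i k)` satisfies
`E[ψ_xᵀ ψ_y / N] = ∏_i K(x(i), y(i))`. -/
theorem hdc_expected_similarity {Ω : Type*} [MeasureSpace Ω]
    [IsProbabilityMeasure (ℙ : Measure Ω)]
    (N d m : ℕ) (hN : 0 < N) (K : Fin m → Fin m → ℝ)
    (σ : Fin d → Equiv.Perm (Fin N))
    (hσ : ∀ i i', i ≠ i' → ∀ k, σ i k ≠ σ i' k)
    (v : Fin m → Fin N → Ω → ℝ)
    (hmeas : ∀ i k, Measurable (v i k))
    (hval : ∀ i k ω, v i k ω = 1 ∨ v i k ω = -1)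
    (hindep : iIndepFun
      (fun k ω => fun i : Fin m => v i k ω) ℙ)
    (hcov : ∀ i j k, ∫ ω, v i k ω * v j k ω = K i j)
    (x y : Fin d → Fin m) :
    ∫ ω, (∑ k, (∏ i, v (x i) (σ i k) ω) * ∏ i, v (y i) (σ i k) ω) / N ∂ℙ =
      ∏ i, K (x i) (y i) := by
  classical
  -- the summand for each coordinate k
  have habs : ∀ (i : Fin m) (k : Fin N) ω, |v i k ω| ≤ 1 := by
    intro i k ω
    rcases hval i k ω with h | h <;> simp [h]
  -- For fixed k, the family i ↦ v (x i) (σ i k) * v (y i) (σ i k) is independent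
  have hprod : ∀ k : Fin N,
      ∫ ω, ∏ i, (v (x i) (σ i k) ω * v (y i) (σ i k) ω) ∂ℙ = ∏ i, K (x i) (y i) := by
    intro k
    have hinj : Function.Injective (fun i : Fin d => σ i k) := by
      intro i i' h
      by_contra hne
      exact hσ i i' hne k h
    have h1 : iIndepFun
        (fun i ω => fun j : Fin m => v j (σ i k) ω) ℙ :=
      iIndepFun_precomp_of_injective hindep hinj
    have h2 : iIndepFun
        (fun i ω => v (x i) (σ i k) ω * v (y i) (σ i k) ω) ℙ := by
      have := h1.comp (g := fun i : Fin d => fun w : Fin m → ℝ => w (x i) * w (y i))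
        (fun i => (measurable_pi_apply (x i)).mul (measurable_pi_apply (y i)))
      exact this
    have := integral_prod_of_iIndepFun h2
      (fun i => ((hmeas _ _).mul (hmeas _ _)))
      (fun i ω => by
        rw [abs_mul]
        calc |v (x i) (σ i k) ω| * |v (y i) (σ i k) ω| ≤ 1 * 1 :=
              mul_le_mul (habs _ _ _) (habs _ _ _) (abs_nonneg _) zero_le_one
          _ = 1 := one_mul 1)
      Finset.univ
    rw [this]
    exact Finset.prod_congr rfl fun i _ => hcov (x i) (y i) (σ i k)
  -- integrability of each summand
  have hintk : ∀ k : Fin N, Integrable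
      (fun ω => (∏ i, v (x i) (σ i k) ω) * ∏ i, v (y i) (σ i k) ω) ℙ := by
    intro k
    refine (integrable_const (1:ℝ)).mono'
      (((Finset.measurable_prod _ (fun i _ => hmeas _ _)).mul
        (Finset.measurable_prod _ (fun i _ => hmeas _ _))).aestronglyMeasurable)
      (Filter.Eventually.of_forall fun ω => ?_)
    rw [Real.norm_eq_abs, abs_mul, Finset.abs_prod, Finset.abs_prod]
    have b1 : ∀ (z : Fin d → Fin m), ∏ i, |v (z i) (σ i k) ω| ≤ 1 := by
      intro z
      calc ∏ i, |v (z i) (σ i k) ω| ≤ ∏ _i : Fin d, (1:ℝ) :=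
            Finset.prod_le_prod (fun i _ => abs_nonneg _) (fun i _ => habs _ _ _)
        _ = 1 := Finset.prod_const_one
    calc (∏ i, |v (x i) (σ i k) ω|) * ∏ i, |v (y i) (σ i k) ω| ≤ 1 * 1 :=
          mul_le_mul (b1 x) (b1 y) (Finset.prod_nonneg fun i _ => abs_nonneg _) zero_le_one
      _ = 1 := one_mul 1
  -- put it all together
  rw [integral_div, integral_finset_sum _ (fun k _ => hintk k)]
  have : ∀ k : Fin N,
      ∫ ω, (∏ i, v (x i) (σ i k) ω) * ∏ i, v (y i) (σ i k) ω ∂ℙ = ∏ i, K (x i) (y i) := by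
    intro k
    rw [← hprod k]
    congr 1
    funext ω
    rw [Finset.prod_mul_distrib]
  rw [Finset.sum_congr rfl fun k _ => this k, Finset.sum_const, Finset.card_univ,
    Fintype.card_fin, nsmul_eq_mul]
  rw [mul_comm, mul_div_assoc, div_self (by exact_mod_cast hN.ne' : (N:ℝ) ≠ 0), mul_one]
end

section
/- Under the assumptions of the main HDC theorem (trace-orthogonal permutation family P, hypervectors with prescribed entrywise covariance K and independent coordinates), the variance of the normalized similarity satisfies Var(ψ_x^T ψ_y / N) ≤ (2 γ_P / N²)(1 − S(x,y)), where S(x,y) = ∏_{i=1}^d K(x(i), y(i)) and γ_P = ‖Σ_{i,i'} Π_i Π_{i'}^T‖_0 is the number of nonzero entries of Σ_{i=1}^d Σ_{i'=1}^d Π_i Π_{i'}^T. -/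
open MeasureTheory ProbabilityTheory Matrix

section Aux
variable {Ω : Type*} [MeasureSpace Ω] [IsProbabilityMeasure (ℙ : Measure Ω)]

/-- product over superset is smaller for [0,1]-valued factors -/
lemma aux_prod_subset_le {ι : Type*} [DecidableEq ι] {s t : Finset ι} (h : s ⊆ t) (f : ι → ℝ)
    (h0 : ∀ i, 0 ≤ f i) (h1 : ∀ i, f i ≤ 1) : ∏ i ∈ t, f i ≤ ∏ i ∈ s, f i := by
  rw [← Finset.prod_sdiff h]
  have h2 : ∏ i ∈ t \ s, f i ≤ 1 := Finset.prod_le_one (fun i _ => h0 i) (fun i _ => h1 i)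
  have h4 : (0:ℝ) ≤ ∏ i ∈ t \ s, f i := Finset.prod_nonneg fun i _ => h0 i
  have h3 : (0:ℝ) ≤ ∏ i ∈ s, f i := Finset.prod_nonneg fun i _ => h0 i
  nlinarith

/-- integral of a product of independent real random variables -/
lemma aux_integral_indep_prod {ι : Type*} {Y : ι → Ω → ℝ}
    (hind : iIndepFun Y ℙ)
    (hm : ∀ i, Measurable (Y i)) (s : Finset ι) :
    ∫ ω, ∏ i ∈ s, Y i ω = ∏ i ∈ s, ∫ ω, Y i ω := by
  classical
  induction s using Finset.induction_on with
  | empty => simp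
  | insert a s ha ih =>
    have hip : IndepFun (∏ j ∈ s, Y j) (Y a) ℙ :=
      hind.indepFun_finsetProd_of_notMem hm ha
    have hmp : Measurable (∏ j ∈ s, Y j) := by
      rw [Finset.prod_fn]
      exact Finset.measurable_prod s fun i (_ : i ∈ s) => hm i
    have key : ∫ ω, (∏ j ∈ s, Y j) ω * Y a ω = (∫ ω, (∏ j ∈ s, Y j) ω) * ∫ ω, Y a ω :=
      hip.integral_fun_mul_eq_mul_integral hmp.aestronglyMeasurable (hm a).aestronglyMeasurable
    simp only [Finset.prod_apply] at key
    simp only [Finset.prod_insert ha]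
    have e1 : ∫ ω, Y a ω * ∏ i ∈ s, Y i ω = ∫ ω, (∏ i ∈ s, Y i ω) * Y a ω := by
      congr 1; funext ω; ring
    rw [e1, key, ih]
    ring

end Aux

section Aux2
variable {Ω : Type*} [MeasureSpace Ω] [IsProbabilityMeasure (ℙ : Measure Ω)]

lemma aux_integrable_bdd {f : Ω → ℝ} (hm : Measurable f) (hb : ∀ ω, |f ω| ≤ 1) :
    Integrable f ℙ :=
  ⟨hm.aestronglyMeasurable, HasFiniteIntegral.of_bounded (C := 1)
    (Filter.Eventually.of_forall (by simpa [Real.norm_eq_abs] using hb))⟩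

lemma aux_abs_integral_le {f : Ω → ℝ} (hb : ∀ ω, |f ω| ≤ 1) : |∫ ω, f ω| ≤ 1 := by
  have h : ‖∫ ω, f ω ∂(ℙ : Measure Ω)‖ ≤ 1 * ((ℙ : Measure Ω) Set.univ).toReal :=
    norm_integral_le_of_norm_le_const
      (Filter.Eventually.of_forall (fun ω => by simpa [Real.norm_eq_abs] using hb ω))
  simpa [Real.norm_eq_abs] using h

lemma aux_master {N m : ℕ} (v : Fin m → Fin N → Ω → ℝ) (hmeas : ∀ i k, Measurable (v i k))
    (hindep : iIndepFun (fun k ω => fun i : Fin m => v i k ω) ℙ)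
    (G : Fin N → (Fin m → ℝ) → ℝ) (hG : ∀ c, Measurable (G c)) :
    ∫ ω, ∏ c, G c (fun i => v i c ω) = ∏ c, ∫ ω, G c (fun i => v i c ω) := by
  have h := hindep.comp G hG
  exact aux_integral_indep_prod (Y := fun c => G c ∘ fun ω => fun i => v i c ω) h
    (fun c => (hG c).comp (measurable_pi_lambda _ fun i => hmeas i c)) Finset.univ

end Aux2

section Comb

lemma aux_prefix_sum {d : ℕ} (r : Fin d → ℝ) (D : Finset (Fin d)) :
    ∑ i ∈ D, (1 - r i) * ∏ i' ∈ D.filter (fun i' => i' < i), r i' = 1 - ∏ i ∈ D, r i := by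
  classical
  refine Finset.induction_on_min D (by simp) ?_
  intro a s ha ih
  have has : a ∉ s := fun h => lt_irrefl a (ha a h)
  have hfa : (insert a s).filter (fun i' => i' < a) = ∅ := by
    ext b
    simp only [Finset.mem_filter, Finset.mem_insert, Finset.notMem_empty, iff_false, not_and]
    rintro (rfl | hb)
    · exact lt_irrefl _
    · exact fun hlt => absurd hlt (not_lt.2 (ha b hb).le)
  have hfi : ∀ i ∈ s, (insert a s).filter (fun i' => i' < i)
      = insert a (s.filter (fun i' => i' < i)) := by
    intro i hi
    ext b
    simp only [Finset.mem_filter, Finset.mem_insert]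
    constructor
    · rintro ⟨(rfl | hb), hlt⟩
      · exact Or.inl rfl
      · exact Or.inr ⟨hb, hlt⟩
    · rintro (rfl | ⟨hb, hlt⟩)
      · exact ⟨Or.inl rfl, ha i hi⟩
      · exact ⟨Or.inr hb, hlt⟩
  rw [Finset.sum_insert has, hfa, Finset.prod_insert has]
  have hcong : ∀ i ∈ s, (1 - r i) * ∏ i' ∈ (insert a s).filter (fun i' => i' < i), r i'
      = r a * ((1 - r i) * ∏ i' ∈ s.filter (fun i' => i' < i), r i') := by
    intro i hi
    rw [hfi i hi, Finset.prod_insert (fun h => has (Finset.mem_of_mem_filter a h))]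
    ring
  rw [Finset.sum_congr rfl hcong, ← Finset.mul_sum, ih]
  simp only [Finset.prod_empty]
  ring

lemma aux_prod_compl_le {d : ℕ} (r : Fin d → ℝ) (h0 : ∀ i, 0 ≤ r i) (h1 : ∀ i, r i ≤ 1)
    (D : Finset (Fin d)) :
    (∏ i ∈ Finset.univ \ D, r i) - (∏ i, r i) ≤
      ∑ i ∈ D, (1 - r i) * ∏ i' ∈ Finset.univ.filter (fun i' => i' < i), r i' := by
  classical
  refine Finset.induction_on_min D (by simp) ?_
  intro a s ha ih
  have has : a ∉ s := fun h => lt_irrefl a (ha a h)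
  have hmem : a ∈ Finset.univ \ s := by simp [has]
  have hsd : Finset.univ \ insert a s = (Finset.univ \ s).erase a :=
    Finset.sdiff_insert _ _ _
  have hprod : ∏ i ∈ Finset.univ \ s, r i = r a * ∏ i ∈ Finset.univ \ insert a s, r i := by
    rw [hsd, Finset.mul_prod_erase _ _ hmem]
  have hsub : Finset.univ.filter (fun i' => i' < a) ⊆ Finset.univ \ insert a s := by
    intro b hb
    simp only [Finset.mem_filter, Finset.mem_univ, true_and] at hb
    simp only [Finset.mem_sdiff, Finset.mem_univ, true_and, Finset.mem_insert]
    rintro (rfl | hbs)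
    · exact lt_irrefl _ hb
    · exact absurd hb (not_lt.2 (ha b hbs).le)
  have hkey : ∏ i ∈ Finset.univ \ insert a s, r i
      ≤ ∏ i' ∈ Finset.univ.filter (fun i' => i' < a), r i' :=
    aux_prod_subset_le hsub r h0 h1
  rw [Finset.sum_insert has]
  have hnn : (0:ℝ) ≤ 1 - r a := by linarith [h1 a]
  have heq : (∏ i ∈ Finset.univ \ insert a s, r i) - (∏ i, r i)
      = (1 - r a) * (∏ i ∈ Finset.univ \ insert a s, r i)
        + ((∏ i ∈ Finset.univ \ s, r i) - (∏ i, r i)) := by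
    rw [hprod]; ring
  have h2 : (1 - r a) * (∏ i ∈ Finset.univ \ insert a s, r i)
      ≤ (1 - r a) * ∏ i' ∈ Finset.univ.filter (fun i' => i' < a), r i' :=
    mul_le_mul_of_nonneg_left hkey hnn
  rw [heq]
  linarith [ih]

end Comb

section Pair
variable {Ω : Type*} [MeasureSpace Ω] [IsProbabilityMeasure (ℙ : Measure Ω)]
variable {N d m : ℕ} {K : Fin m → Fin m → ℝ} {σ : Fin d → Equiv.Perm (Fin N)}
variable {v : Fin m → Fin N → Ω → ℝ}

lemma aux_w_meas (hmeas : ∀ i k, Measurable (v i k)) (a b : Fin m) (c : Fin N) :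
    Measurable (fun ω => v a c ω * v b c ω) := (hmeas a c).mul (hmeas b c)

lemma aux_G_meas (x y : Fin d → Fin m) (s : Finset (Fin d)) :
    Measurable (fun u : Fin m → ℝ => ∏ i ∈ s, (u (x i) * u (y i))) :=
  Finset.measurable_prod s fun i _ => (measurable_pi_apply (x i)).mul (measurable_pi_apply (y i))

lemma aux_fiber_cases (hσ : ∀ i i', i ≠ i' → ∀ k, σ i k ≠ σ i' k) (k c : Fin N) :
    (Finset.univ.filter (fun i : Fin d => σ i k = c)) = ∅ ∨
      ∃ i, σ i k = c ∧ (Finset.univ.filter (fun i : Fin d => σ i k = c)) = {i} := by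
  classical
  rcases (Finset.univ.filter (fun i : Fin d => σ i k = c)).eq_empty_or_nonempty with he | ⟨i, hi⟩
  · exact Or.inl he
  · simp only [Finset.mem_filter, Finset.mem_univ, true_and] at hi
    refine Or.inr ⟨i, hi, ?_⟩
    apply Finset.eq_singleton_iff_unique_mem.mpr
    refine ⟨by simp [hi], ?_⟩
    intro j hj
    simp only [Finset.mem_filter, Finset.mem_univ, true_and] at hj
    by_contra hne
    exact hσ j i hne k (by rw [hj, hi])

lemma aux_mean (hmeas : ∀ i k, Measurable (v i k))
    (hindep : iIndepFun
      (fun k ω => fun i : Fin m => v i k ω) ℙ)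
    (hcov : ∀ i j k, ∫ ω, v i k ω * v j k ω = K i j)
    (hσ : ∀ i i', i ≠ i' → ∀ k, σ i k ≠ σ i' k)
    (x y : Fin d → Fin m) (k : Fin N) :
    ∫ ω, ∏ i, (v (x i) (σ i k) ω * v (y i) (σ i k) ω) = ∏ i, K (x i) (y i) := by
  classical
  set G : Fin N → (Fin m → ℝ) → ℝ :=
    fun c u => ∏ i ∈ Finset.univ.filter (fun i : Fin d => σ i k = c), (u (x i) * u (y i)) with hG
  have hGmeas : ∀ c, Measurable (G c) := fun c => aux_G_meas x y _
  have hrepr : ∀ ω, ∏ i, (v (x i) (σ i k) ω * v (y i) (σ i k) ω)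
      = ∏ c, G c (fun i => v i c ω) := by
    intro ω
    rw [← Finset.prod_fiberwise_of_maps_to (g := fun i : Fin d => σ i k)
      (fun i _ => Finset.mem_univ (σ i k)) (fun i => v (x i) (σ i k) ω * v (y i) (σ i k) ω)]
    refine Finset.prod_congr rfl fun c _ => Finset.prod_congr rfl fun i hi => ?_
    simp only [Finset.mem_filter] at hi
    rw [hi.2]
  have hint : ∫ ω, ∏ c, G c (fun i => v i c ω) = ∏ c, ∫ ω, G c (fun i => v i c ω) :=
    aux_master v hmeas hindep G hGmeas
  have hval : ∀ c, ∫ ω, G c (fun i => v i c ω)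
      = ∏ i ∈ Finset.univ.filter (fun i : Fin d => σ i k = c), K (x i) (y i) := by
    intro c
    rcases aux_fiber_cases hσ k c with he | ⟨i, hic, hsing⟩
    · simp [hG, he]
    · simp only [hG, hsing, Finset.prod_singleton]
      exact hcov (x i) (y i) c
  calc ∫ ω, ∏ i, (v (x i) (σ i k) ω * v (y i) (σ i k) ω)
      = ∫ ω, ∏ c, G c (fun i => v i c ω) := by
        congr 1; funext ω; exact hrepr ω
    _ = ∏ c, ∫ ω, G c (fun i => v i c ω) := hint
    _ = ∏ c, ∏ i ∈ Finset.univ.filter (fun i : Fin d => σ i k = c), K (x i) (y i) :=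
        Finset.prod_congr rfl fun c _ => hval c
    _ = ∏ i, K (x i) (y i) := Finset.prod_fiberwise_of_maps_to
        (fun i _ => Finset.mem_univ (σ i k)) _

end Pair

section Pair2
variable {Ω : Type*} [MeasureSpace Ω] [IsProbabilityMeasure (ℙ : Measure Ω)]
variable {N d m : ℕ} {K : Fin m → Fin m → ℝ} {σ : Fin d → Equiv.Perm (Fin N)}
variable {v : Fin m → Fin N → Ω → ℝ}

lemma aux_absK (hmeas : ∀ i k, Measurable (v i k))
    (hval : ∀ i k ω, v i k ω = 1 ∨ v i k ω = -1)
    (hcov : ∀ i j k, ∫ ω, v i k ω * v j k ω = K i j) (hN : 0 < N) (a b : Fin m) :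
    |K a b| ≤ 1 := by
  have c : Fin N := ⟨0, hN⟩
  rw [← hcov a b c]
  refine aux_abs_integral_le fun ω => ?_
  rw [abs_mul]
  rcases hval a c ω with h | h <;> rcases hval b c ω with h' | h' <;> simp [h, h']

lemma aux_pair (hmeas : ∀ i k, Measurable (v i k))
    (hval : ∀ i k ω, v i k ω = 1 ∨ v i k ω = -1)
    (hindep : iIndepFun
      (fun k ω => fun i : Fin m => v i k ω) ℙ)
    (hcov : ∀ i j k, ∫ ω, v i k ω * v j k ω = K i j)
    (hσ : ∀ i i', i ≠ i' → ∀ k, σ i k ≠ σ i' k)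
    (x y : Fin d → Fin m) (k l : Fin N) :
    ∫ ω, (∏ i, (v (x i) (σ i k) ω * v (y i) (σ i k) ω))
        * (∏ j, (v (x j) (σ j l) ω * v (y j) (σ j l) ω))
      ≤ (∏ i ∈ Finset.univ \ Finset.univ.filter (fun i : Fin d => ∃ j, σ i k = σ j l),
          |K (x i) (y i)|)
        * (∏ j ∈ Finset.univ \ Finset.univ.filter (fun j : Fin d => ∃ i, σ i k = σ j l),
          |K (x j) (y j)|) := by
  classical
  set r : Fin d → ℝ := fun i => |K (x i) (y i)| with hrdef
  set D : Finset (Fin d) := Finset.univ.filter (fun i : Fin d => ∃ j, σ i k = σ j l) with hD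
  set R : Finset (Fin d) := Finset.univ.filter (fun j : Fin d => ∃ i, σ i k = σ j l) with hR
  set G : Fin N → (Fin m → ℝ) → ℝ := fun c u =>
    (∏ i ∈ Finset.univ.filter (fun i : Fin d => σ i k = c), (u (x i) * u (y i)))
      * (∏ j ∈ Finset.univ.filter (fun j : Fin d => σ j l = c), (u (x j) * u (y j))) with hG
  have hGmeas : ∀ c, Measurable (G c) := fun c => (aux_G_meas x y _).mul (aux_G_meas x y _)
  have hK1 : ∀ a b, |K a b| ≤ 1 := by
    intro a b
    have hNpos : 0 < N := Nat.pos_of_ne_zero (by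
      rintro rfl
      exact absurd k.2 (by simp))
    exact aux_absK hmeas hval hcov hNpos a b
  have habsw : ∀ (a b : Fin m) (c : Fin N) ω, |v a c ω * v b c ω| = 1 := by
    intro a b c ω
    rw [abs_mul]
    rcases hval a c ω with h | h <;> rcases hval b c ω with h' | h' <;> simp [h, h']
  -- representation
  have hrepr : ∀ ω, (∏ i, (v (x i) (σ i k) ω * v (y i) (σ i k) ω))
        * (∏ j, (v (x j) (σ j l) ω * v (y j) (σ j l) ω))
      = ∏ c, G c (fun i => v i c ω) := by
    intro ω
    have h1 : ∏ i, (v (x i) (σ i k) ω * v (y i) (σ i k) ω)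
        = ∏ c, ∏ i ∈ Finset.univ.filter (fun i : Fin d => σ i k = c),
            (v (x i) c ω * v (y i) c ω) := by
      rw [← Finset.prod_fiberwise_of_maps_to (g := fun i : Fin d => σ i k)
        (fun i _ => Finset.mem_univ (σ i k)) (fun i => v (x i) (σ i k) ω * v (y i) (σ i k) ω)]
      refine Finset.prod_congr rfl fun c _ => Finset.prod_congr rfl fun i hi => ?_
      simp only [Finset.mem_filter] at hi
      rw [hi.2]
    have h2 : ∏ j, (v (x j) (σ j l) ω * v (y j) (σ j l) ω)
        = ∏ c, ∏ j ∈ Finset.univ.filter (fun j : Fin d => σ j l = c),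
            (v (x j) c ω * v (y j) c ω) := by
      rw [← Finset.prod_fiberwise_of_maps_to (g := fun j : Fin d => σ j l)
        (fun j _ => Finset.mem_univ (σ j l)) (fun j => v (x j) (σ j l) ω * v (y j) (σ j l) ω)]
      refine Finset.prod_congr rfl fun c _ => Finset.prod_congr rfl fun j hj => ?_
      simp only [Finset.mem_filter] at hj
      rw [hj.2]
    rw [h1, h2, ← Finset.prod_mul_distrib]
  have hint : ∫ ω, ∏ c, G c (fun i => v i c ω) = ∏ c, ∫ ω, G c (fun i => v i c ω) :=
    aux_master v hmeas hindep G hGmeas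
  -- per-coordinate bound
  set t : Fin N → ℝ := fun c =>
    (∏ i ∈ (Finset.univ.filter (fun i : Fin d => σ i k = c)).filter (fun i => i ∉ D), r i)
      * (∏ j ∈ (Finset.univ.filter (fun j : Fin d => σ j l = c)).filter (fun j => j ∉ R), r j)
    with ht
  have hbound : ∀ c, |∫ ω, G c (fun i => v i c ω)| ≤ t c := by
    intro c
    have hr1 : ∀ i, r i ≤ 1 := fun i => hK1 _ _
    have hr0 : ∀ i, 0 ≤ r i := fun i => abs_nonneg _
    rcases aux_fiber_cases hσ k c with hek | ⟨i, hik, hsk⟩ <;>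
      rcases aux_fiber_cases (σ := σ) hσ l c with hel | ⟨j, hjl, hsl⟩
    · simp [hG, ht, hek, hel]
    · -- k-fiber empty, l-fiber {j}
      simp only [hG, ht, hek, hsl, Finset.prod_empty, Finset.prod_singleton, one_mul,
        Finset.filter_empty, Finset.filter_singleton]
      rw [hcov (x j) (y j) c]
      by_cases hjR : j ∈ R
      · simp [hjR, hK1]
      · simp [hjR, hrdef]
    · -- k-fiber {i}, l-fiber empty
      simp only [hG, ht, hel, hsk, Finset.prod_empty, Finset.prod_singleton, mul_one,
        Finset.filter_empty, Finset.filter_singleton]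
      rw [hcov (x i) (y i) c]
      by_cases hiD : i ∈ D
      · simp [hiD, hK1]
      · simp [hiD, hrdef]
    · -- both singletons
      have hiD : i ∈ D := by
        rw [hD]
        simp only [Finset.mem_filter, Finset.mem_univ, true_and]
        exact ⟨j, by rw [hik, hjl]⟩
      have hjR : j ∈ R := by
        rw [hR]
        simp only [Finset.mem_filter, Finset.mem_univ, true_and]
        exact ⟨i, by rw [hik, hjl]⟩
      have habs : ∀ ω, |G c (fun i => v i c ω)| ≤ 1 := by
        intro ω
        simp only [hG, hsk, hsl, Finset.prod_singleton, abs_mul, habsw, mul_one, le_refl]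
      have h1 : |∫ ω, G c (fun i => v i c ω)| ≤ 1 := aux_abs_integral_le habs
      simp only [ht, hsk, hsl, Finset.filter_singleton, hiD, hjR]
      simpa using h1
  -- product of the bounds
  have hprod_t : ∏ c, t c
      = (∏ i ∈ Finset.univ \ D, r i) * (∏ j ∈ Finset.univ \ R, r j) := by
    rw [ht, Finset.prod_mul_distrib]
    have hsdD : Finset.univ.filter (fun i : Fin d => i ∉ D) = Finset.univ \ D := by
      ext i; simp
    have hsdR : Finset.univ.filter (fun j : Fin d => j ∉ R) = Finset.univ \ R := by
      ext j; simp
    congr 1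
    · have hcomm : ∀ c, (Finset.univ.filter (fun i : Fin d => σ i k = c)).filter (fun i => i ∉ D)
          = (Finset.univ.filter (fun i : Fin d => i ∉ D)).filter (fun i : Fin d => σ i k = c) := by
        intro c
        simp only [Finset.filter_filter]
        exact Finset.filter_congr fun i _ => by tauto
      calc ∏ c, ∏ i ∈ (Finset.univ.filter (fun i : Fin d => σ i k = c)).filter (fun i => i ∉ D), r i
          = ∏ c, ∏ i ∈ (Finset.univ.filter (fun i : Fin d => i ∉ D)).filter
              (fun i : Fin d => σ i k = c), r i :=
            Finset.prod_congr rfl fun c _ => by rw [hcomm c]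
        _ = ∏ i ∈ Finset.univ.filter (fun i : Fin d => i ∉ D), r i :=
            Finset.prod_fiberwise_of_maps_to (fun i _ => Finset.mem_univ (σ i k)) _
        _ = ∏ i ∈ Finset.univ \ D, r i := by rw [hsdD]
    · have hcomm : ∀ c, (Finset.univ.filter (fun j : Fin d => σ j l = c)).filter (fun j => j ∉ R)
          = (Finset.univ.filter (fun j : Fin d => j ∉ R)).filter (fun j : Fin d => σ j l = c) := by
        intro c
        simp only [Finset.filter_filter]
        exact Finset.filter_congr fun i _ => by tauto
      calc ∏ c, ∏ j ∈ (Finset.univ.filter (fun j : Fin d => σ j l = c)).filter (fun j => j ∉ R), r j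
          = ∏ c, ∏ j ∈ (Finset.univ.filter (fun j : Fin d => j ∉ R)).filter
              (fun j : Fin d => σ j l = c), r j :=
            Finset.prod_congr rfl fun c _ => by rw [hcomm c]
        _ = ∏ j ∈ Finset.univ.filter (fun j : Fin d => j ∉ R), r j :=
            Finset.prod_fiberwise_of_maps_to (fun j _ => Finset.mem_univ (σ j l)) _
        _ = ∏ j ∈ Finset.univ \ R, r j := by rw [hsdR]
  calc ∫ ω, (∏ i, (v (x i) (σ i k) ω * v (y i) (σ i k) ω))
        * (∏ j, (v (x j) (σ j l) ω * v (y j) (σ j l) ω))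
      = ∫ ω, ∏ c, G c (fun i => v i c ω) := by congr 1; funext ω; exact hrepr ω
    _ = ∏ c, ∫ ω, G c (fun i => v i c ω) := hint
    _ ≤ |∏ c, ∫ ω, G c (fun i => v i c ω)| := le_abs_self _
    _ = ∏ c, |∫ ω, G c (fun i => v i c ω)| := Finset.abs_prod _ _
    _ ≤ ∏ c, t c := Finset.prod_le_prod (fun c _ => abs_nonneg _) (fun c _ => hbound c)
    _ = (∏ i ∈ Finset.univ \ D, r i) * (∏ j ∈ Finset.univ \ R, r j) := hprod_t

end Pair2


set_option maxHeartbeats 1000000 in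
/-- Variance bound for the HDC similarity: under the assumptions of the main
theorem (trace-orthogonal permutation family, `±1` hypervectors with
prescribed entrywise covariance `K` and independent coordinates),
`Var(ψ_xᵀψ_y/N) ≤ (2 γ_P / N²)(1 - S(x,y))` where
`S(x,y) = ∏_i K(x(i),y(i))` and `γ_P = ‖∑_{i,i'} Π_i Π_{i'}ᵀ‖₀`. -/
theorem hdc_variance_bound {Ω : Type*} [MeasureSpace Ω]
    [IsProbabilityMeasure (ℙ : Measure Ω)]
    (N d m : ℕ) (hN : 0 < N) (K : Fin m → Fin m → ℝ)
    (σ : Fin d → Equiv.Perm (Fin N))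
    (hσ : ∀ i i', i ≠ i' → ∀ k, σ i k ≠ σ i' k)
    (P : Fin d → Matrix (Fin N) (Fin N) ℝ)
    (hP : ∀ i j j', P i j j' = if j = σ i j' then 1 else 0)
    (γ : ℕ)
    (hγ : γ = ((Finset.univ : Finset (Fin N × Fin N)).filter
      (fun p => (∑ i, ∑ i', P i * (P i')ᵀ) p.1 p.2 ≠ 0)).card)
    (v : Fin m → Fin N → Ω → ℝ)
    (hmeas : ∀ i k, Measurable (v i k))
    (hval : ∀ i k ω, v i k ω = 1 ∨ v i k ω = -1)
    (hindep : iIndepFun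
      (fun k ω => fun i : Fin m => v i k ω) ℙ)
    (hcov : ∀ i j k, ∫ ω, v i k ω * v j k ω = K i j)
    (x y : Fin d → Fin m) :
    Var[fun ω => (∑ k, (∏ i, v (x i) (σ i k) ω) * ∏ i, v (y i) (σ i k) ω) / N] ≤
      2 * γ / N ^ 2 * (1 - ∏ i, K (x i) (y i)) := by
  classical
  have hNR : (0:ℝ) < N := by exact_mod_cast hN
  -- abbreviations
  have hr1 : ∀ i : Fin d, |K (x i) (y i)| ≤ 1 := fun i => aux_absK hmeas hval hcov hN _ _
  have hr0 : ∀ i : Fin d, (0:ℝ) ≤ |K (x i) (y i)| := fun i => abs_nonneg _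
  set r : Fin d → ℝ := fun i => |K (x i) (y i)| with hrdef
  set S : ℝ := ∏ i, K (x i) (y i) with hSdef
  set s : ℝ := ∏ i, r i with hsdef
  have hsabs : s = |S| := by rw [hSdef, hsdef, Finset.abs_prod]
  have hs0 : 0 ≤ s := Finset.prod_nonneg fun i _ => hr0 i
  have hs1 : s ≤ 1 := Finset.prod_le_one (fun i _ => hr0 i) (fun i _ => hr1 i)
  have hSs : S ≤ s := by rw [hsabs]; exact le_abs_self S
  have hsq : S ^ 2 = s ^ 2 := by rw [hsabs, sq_abs]
  -- Z
  set Z : Fin N → Ω → ℝ := fun k ω => ∏ i, (v (x i) (σ i k) ω * v (y i) (σ i k) ω) with hZdef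
  have habsw : ∀ (a b : Fin m) (c : Fin N) ω, |v a c ω * v b c ω| = 1 := by
    intro a b c ω
    rw [abs_mul]
    rcases hval a c ω with h | h <;> rcases hval b c ω with h' | h' <;> simp [h, h']
  have hZmeas : ∀ k, Measurable (Z k) := by
    intro k
    have := Finset.measurable_prod Finset.univ
      (fun i (_ : i ∈ Finset.univ) => (hmeas (x i) (σ i k)).mul (hmeas (y i) (σ i k)))
    exact this
  have hZabs : ∀ k ω, |Z k ω| = 1 := by
    intro k ω
    rw [hZdef]
    simp only [Finset.abs_prod]
    rw [Finset.prod_congr rfl fun i _ => habsw (x i) (y i) (σ i k) ω]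
    simp
  have hZint : ∀ k, Integrable (Z k) ℙ := fun k =>
    aux_integrable_bdd (hZmeas k) (fun ω => le_of_eq (hZabs k ω))
  have hZZint : ∀ k l, Integrable (fun ω => Z k ω * Z l ω) ℙ := by
    intro k l
    refine aux_integrable_bdd ((hZmeas k).mul (hZmeas l)) fun ω => ?_
    rw [abs_mul, hZabs, hZabs]; norm_num
  have hEZ : ∀ k, ∫ ω, Z k ω = S := fun k => aux_mean hmeas hindep hcov hσ x y k
  -- prefix products
  set π : Fin d → ℝ := fun i => ∏ i' ∈ Finset.univ.filter (fun i' => i' < i), r i' with hπdef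
  set g : Fin d → ℝ := fun i => (1 - r i) * π i with hgdef
  have hg0 : ∀ i, 0 ≤ g i := by
    intro i
    refine mul_nonneg (by linarith [hr1 i]) (Finset.prod_nonneg fun i' _ => hr0 i')
  have hgsum : ∑ i, g i = 1 - s := aux_prefix_sum r Finset.univ
  -- D, R
  set D : Fin N → Fin N → Finset (Fin d) :=
    fun k l => Finset.univ.filter (fun i : Fin d => ∃ j, σ i k = σ j l) with hDdef
  set R : Fin N → Fin N → Finset (Fin d) :=
    fun k l => Finset.univ.filter (fun j : Fin d => ∃ i, σ i k = σ j l) with hRdef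
  -- per-pair bound
  have hpair : ∀ k l, (∫ ω, Z k ω * Z l ω) - S ^ 2
      ≤ (∑ i ∈ D k l, g i) + (∑ j ∈ R k l, g j) := by
    intro k l
    have h1 : ∫ ω, Z k ω * Z l ω
        ≤ (∏ i ∈ Finset.univ \ D k l, r i) * (∏ j ∈ Finset.univ \ R k l, r j) :=
      aux_pair hmeas hval hindep hcov hσ x y k l
    have hFD1 : (∏ i ∈ Finset.univ \ D k l, r i) ≤ 1 :=
      Finset.prod_le_one (fun i _ => hr0 i) (fun i _ => hr1 i)
    have hFR1 : (∏ j ∈ Finset.univ \ R k l, r j) ≤ 1 :=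
      Finset.prod_le_one (fun i _ => hr0 i) (fun i _ => hr1 i)
    have hFDs : s ≤ ∏ i ∈ Finset.univ \ D k l, r i :=
      aux_prod_subset_le (Finset.sdiff_subset) r hr0 hr1
    have hFRs : s ≤ ∏ j ∈ Finset.univ \ R k l, r j :=
      aux_prod_subset_le (Finset.sdiff_subset) r hr0 hr1
    have hD : (∏ i ∈ Finset.univ \ D k l, r i) - s ≤ ∑ i ∈ D k l, g i := by
      have := aux_prod_compl_le r hr0 hr1 (D k l)
      simpa [hgdef, hπdef, hsdef] using this
    have hR : (∏ j ∈ Finset.univ \ R k l, r j) - s ≤ ∑ j ∈ R k l, g j := by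
      have := aux_prod_compl_le r hr0 hr1 (R k l)
      simpa [hgdef, hπdef, hsdef] using this
    have halg : (∏ i ∈ Finset.univ \ D k l, r i) * (∏ j ∈ Finset.univ \ R k l, r j) - s ^ 2
        ≤ ((∏ i ∈ Finset.univ \ D k l, r i) - s) + ((∏ j ∈ Finset.univ \ R k l, r j) - s) := by
      nlinarith [hFD1, hFR1, hFDs, hFRs, hs0, hs1]
    rw [hsq]
    linarith [h1, halg, hD, hR]
  -- counting
  have hcount1 : ∀ (i : Fin d) (k : Fin N),
      ((Finset.univ.filter (fun l : Fin N => ∃ j, σ i k = σ j l)).card : ℝ) ≤ d := by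
    intro i k
    have hsub : Finset.univ.filter (fun l : Fin N => ∃ j, σ i k = σ j l)
        ⊆ Finset.univ.image (fun j : Fin d => (σ j).symm (σ i k)) := by
      intro l hl
      simp only [Finset.mem_filter, Finset.mem_univ, true_and] at hl
      obtain ⟨j, hj⟩ := hl
      refine Finset.mem_image.mpr ⟨j, Finset.mem_univ j, ?_⟩
      rw [hj]; exact Equiv.symm_apply_apply _ _
    have h1 := (Finset.card_le_card hsub).trans Finset.card_image_le
    have h2 : (Finset.univ : Finset (Fin d)).card = d := by simp
    rw [h2] at h1
    exact_mod_cast h1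
  have hcount2 : ∀ (j : Fin d) (l : Fin N),
      ((Finset.univ.filter (fun k : Fin N => ∃ i, σ i k = σ j l)).card : ℝ) ≤ d := by
    intro j l
    have hsub : Finset.univ.filter (fun k : Fin N => ∃ i, σ i k = σ j l)
        ⊆ Finset.univ.image (fun i : Fin d => (σ i).symm (σ j l)) := by
      intro k hk
      simp only [Finset.mem_filter, Finset.mem_univ, true_and] at hk
      obtain ⟨i, hi⟩ := hk
      refine Finset.mem_image.mpr ⟨i, Finset.mem_univ i, ?_⟩
      rw [← hi]; exact Equiv.symm_apply_apply _ _
    have h1 := (Finset.card_le_card hsub).trans Finset.card_image_le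
    have h2 : (Finset.univ : Finset (Fin d)).card = d := by simp
    rw [h2] at h1
    exact_mod_cast h1
  -- sum of the D-parts
  have hsum1 : ∑ k, ∑ l, ∑ i ∈ D k l, g i ≤ (N : ℝ) * ((d : ℝ) * (1 - s)) := by
    have hinner : ∀ (i : Fin d) (k : Fin N),
        ∑ l : Fin N, (if ∃ j, σ i k = σ j l then g i else 0) ≤ (d : ℝ) * g i := by
      intro i k
      rw [← Finset.sum_filter, Finset.sum_const, nsmul_eq_mul]
      exact mul_le_mul_of_nonneg_right (hcount1 i k) (hg0 i)
    calc ∑ k, ∑ l, ∑ i ∈ D k l, g i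
        = ∑ k : Fin N, ∑ l : Fin N, ∑ i : Fin d,
            (if ∃ j, σ i k = σ j l then g i else 0) := by
          refine Finset.sum_congr rfl fun k _ => Finset.sum_congr rfl fun l _ => ?_
          rw [hDdef, Finset.sum_filter]
      _ = ∑ k : Fin N, ∑ i : Fin d, ∑ l : Fin N,
            (if ∃ j, σ i k = σ j l then g i else 0) :=
          Finset.sum_congr rfl fun k _ => Finset.sum_comm
      _ = ∑ i : Fin d, ∑ k : Fin N, ∑ l : Fin N,
            (if ∃ j, σ i k = σ j l then g i else 0) := Finset.sum_comm
      _ ≤ ∑ i : Fin d, ∑ _k : Fin N, (d : ℝ) * g i :=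
          Finset.sum_le_sum fun i _ => Finset.sum_le_sum fun k _ => hinner i k
      _ = (N : ℝ) * ((d : ℝ) * (1 - s)) := by
          simp only [Finset.sum_const, Finset.card_univ, Fintype.card_fin, nsmul_eq_mul]
          rw [← Finset.mul_sum, ← Finset.mul_sum, hgsum]
  have hsum2 : ∑ k, ∑ l, ∑ j ∈ R k l, g j ≤ (N : ℝ) * ((d : ℝ) * (1 - s)) := by
    have hinner : ∀ (j : Fin d) (l : Fin N),
        ∑ k : Fin N, (if ∃ i, σ i k = σ j l then g j else 0) ≤ (d : ℝ) * g j := by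
      intro j l
      rw [← Finset.sum_filter, Finset.sum_const, nsmul_eq_mul]
      exact mul_le_mul_of_nonneg_right (hcount2 j l) (hg0 j)
    calc ∑ k, ∑ l, ∑ j ∈ R k l, g j
        = ∑ k : Fin N, ∑ l : Fin N, ∑ j : Fin d,
            (if ∃ i, σ i k = σ j l then g j else 0) := by
          refine Finset.sum_congr rfl fun k _ => Finset.sum_congr rfl fun l _ => ?_
          rw [hRdef, Finset.sum_filter]
      _ = ∑ k : Fin N, ∑ j : Fin d, ∑ l : Fin N,
            (if ∃ i, σ i k = σ j l then g j else 0) :=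
          Finset.sum_congr rfl fun k _ => Finset.sum_comm
      _ = ∑ j : Fin d, ∑ k : Fin N, ∑ l : Fin N,
            (if ∃ i, σ i k = σ j l then g j else 0) := Finset.sum_comm
      _ = ∑ j : Fin d, ∑ l : Fin N, ∑ k : Fin N,
            (if ∃ i, σ i k = σ j l then g j else 0) :=
          Finset.sum_congr rfl fun j _ => Finset.sum_comm
      _ ≤ ∑ j : Fin d, ∑ _l : Fin N, (d : ℝ) * g j :=
          Finset.sum_le_sum fun j _ => Finset.sum_le_sum fun l _ => hinner j l
      _ = (N : ℝ) * ((d : ℝ) * (1 - s)) := by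
          simp only [Finset.sum_const, Finset.card_univ, Fintype.card_fin, nsmul_eq_mul]
          rw [← Finset.mul_sum, ← Finset.mul_sum, hgsum]
  -- gamma is at least d * N
  have hγge : (d : ℝ) * N ≤ (γ : ℝ) := by
    have hcard : d * N ≤ γ := by
      rcases Nat.eq_zero_or_pos d with hd0 | hdpos
      · simp [hd0]
      · have i0 : Fin d := ⟨0, hdpos⟩
        rw [hγ]
        have hkey := Finset.card_le_card_of_injOn
          (f := fun p : Fin d × Fin N => ((σ p.1 p.2, σ i0 p.2) : Fin N × Fin N))
          (s := (Finset.univ : Finset (Fin d × Fin N)))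
          (t := (Finset.univ : Finset (Fin N × Fin N)).filter
            (fun q => (∑ i, ∑ i', P i * (P i')ᵀ) q.1 q.2 ≠ 0))
          ?_ ?_
        · simpa using hkey
        · intro p _
          simp only [Finset.mem_coe, Finset.mem_filter, Finset.mem_univ, true_and]
          have hnn : ∀ (a b : Fin d), (0:ℝ) ≤ (P a * (P b)ᵀ) (σ p.1 p.2) (σ i0 p.2) := by
            intro a b
            rw [Matrix.mul_apply]
            refine Finset.sum_nonneg fun c _ => ?_
            rw [Matrix.transpose_apply, hP, hP]
            split <;> split <;> norm_num
          have hterm : (1:ℝ) ≤ (P p.1 * (P i0)ᵀ) (σ p.1 p.2) (σ i0 p.2) := by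
            rw [Matrix.mul_apply]
            have hnn2 : ∀ c : Fin N,
                (0:ℝ) ≤ P p.1 (σ p.1 p.2) c * (P i0)ᵀ c (σ i0 p.2) := by
              intro c
              rw [Matrix.transpose_apply, hP, hP]
              split <;> split <;> norm_num
            have hc : P p.1 (σ p.1 p.2) p.2 * (P i0)ᵀ p.2 (σ i0 p.2) = 1 := by
              rw [Matrix.transpose_apply, hP, hP]
              simp
            calc (1:ℝ) = P p.1 (σ p.1 p.2) p.2 * (P i0)ᵀ p.2 (σ i0 p.2) := hc.symm
              _ ≤ ∑ c, P p.1 (σ p.1 p.2) c * (P i0)ᵀ c (σ i0 p.2) :=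
                  Finset.single_le_sum (fun c _ => hnn2 c) (Finset.mem_univ p.2)
          have hpos : (0:ℝ) < (∑ i, ∑ i', P i * (P i')ᵀ) (σ p.1 p.2) (σ i0 p.2) := by
            have h1 : (1:ℝ) ≤ ∑ i', (P p.1 * (P i')ᵀ) (σ p.1 p.2) (σ i0 p.2) :=
              hterm.trans (Finset.single_le_sum (fun b _ => hnn p.1 b) (Finset.mem_univ i0))
            have h2 : ∑ i', (P p.1 * (P i')ᵀ) (σ p.1 p.2) (σ i0 p.2)
                ≤ ∑ i : Fin d, ∑ i', (P i * (P i')ᵀ) (σ p.1 p.2) (σ i0 p.2) :=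
              Finset.single_le_sum
                (f := fun i => ∑ i', (P i * (P i')ᵀ) (σ p.1 p.2) (σ i0 p.2))
                (fun i _ => Finset.sum_nonneg fun b _ => hnn i b) (Finset.mem_univ p.1)
            have h3 : (∑ i, ∑ i', P i * (P i')ᵀ) (σ p.1 p.2) (σ i0 p.2)
                = ∑ i : Fin d, ∑ i', (P i * (P i')ᵀ) (σ p.1 p.2) (σ i0 p.2) := by
              rw [Matrix.sum_apply]
              exact Finset.sum_congr rfl fun i _ => by rw [Matrix.sum_apply]
            rw [h3]
            linarith
          exact ne_of_gt hpos
        · intro p _ q _ hpq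
          simp only [Prod.mk.injEq] at hpq
          have ht : p.2 = q.2 := (σ i0).injective hpq.2
          have hi : p.1 = q.1 := by
            by_contra hne
            exact hσ p.1 q.1 hne p.2 (by rw [hpq.1, ht])
          exact Prod.ext hi ht
    calc (d : ℝ) * N = ((d * N : ℕ) : ℝ) := by push_cast; ring
      _ ≤ (γ : ℝ) := by exact_mod_cast hcard
  -- rewrite the goal function
  have hfun : (fun ω => (∑ k, (∏ i, v (x i) (σ i k) ω) * ∏ i, v (y i) (σ i k) ω) / (N:ℝ))
      = fun ω => (∑ k, Z k ω) / (N:ℝ) := by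
    funext ω
    congr 1
    refine Finset.sum_congr rfl fun k _ => ?_
    rw [hZdef, ← Finset.prod_mul_distrib]
  rw [hfun]
  have hsummeas : Measurable (fun ω => ∑ k, Z k ω) :=
    Finset.measurable_sum Finset.univ fun k _ => hZmeas k
  have hTmeas : Measurable (fun ω => (∑ k, Z k ω) / (N:ℝ)) := hsummeas.div_const _
  have hTbd : ∀ ω, ‖(∑ k, Z k ω) / (N:ℝ)‖ ≤ 1 := by
    intro ω
    rw [Real.norm_eq_abs, abs_div, abs_of_pos hNR, div_le_one hNR]
    calc |∑ k, Z k ω| ≤ ∑ k, |Z k ω| := Finset.abs_sum_le_sum_abs _ _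
      _ = ∑ _k : Fin N, (1:ℝ) := Finset.sum_congr rfl fun k _ => hZabs k ω
      _ = (N:ℝ) := by simp
  have hTmem : MemLp (fun ω => (∑ k, Z k ω) / (N:ℝ)) 2 ℙ :=
    MemLp.of_bound hTmeas.aestronglyMeasurable 1 (Filter.Eventually.of_forall hTbd)
  rw [variance_eq_sub hTmem]
  simp only [Pi.pow_apply]
  have hEX : ∫ ω, (∑ k, Z k ω) / (N:ℝ) = S := by
    rw [integral_div, integral_finset_sum Finset.univ fun k _ => hZint k]
    rw [Finset.sum_congr rfl fun k _ => hEZ k]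
    simp only [Finset.sum_const, Finset.card_univ, Fintype.card_fin, nsmul_eq_mul]
    field_simp
  have hEX2 : ∫ ω, ((∑ k, Z k ω) / (N:ℝ)) ^ 2
      = (∑ k, ∑ l, ∫ ω, Z k ω * Z l ω) / (N:ℝ) ^ 2 := by
    have hfun2 : (fun ω => ((∑ k, Z k ω) / (N:ℝ)) ^ 2)
        = fun ω => (∑ k, ∑ l, Z k ω * Z l ω) / (N:ℝ) ^ 2 := by
      funext ω
      rw [div_pow, sq, Finset.sum_mul_sum]
    rw [hfun2, integral_div]
    congr 1
    rw [integral_finset_sum Finset.univ fun k _ =>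
      integrable_finset_sum Finset.univ fun l _ => hZZint k l]
    exact Finset.sum_congr rfl fun k _ =>
      integral_finset_sum Finset.univ fun l _ => hZZint k l
  have hmain : (∑ k, ∑ l, ∫ ω, Z k ω * Z l ω) - (N:ℝ) ^ 2 * S ^ 2
      ≤ 2 * (γ:ℝ) * (1 - S) := by
    have hid : (∑ k, ∑ l, ∫ ω, Z k ω * Z l ω) - (N:ℝ) ^ 2 * S ^ 2
        = ∑ k, ∑ l, ((∫ ω, Z k ω * Z l ω) - S ^ 2) := by
      rw [Finset.sum_congr rfl fun k (_ : k ∈ Finset.univ) =>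
        (Finset.sum_sub_distrib (s := Finset.univ) _ _)]
      rw [Finset.sum_sub_distrib]
      simp only [Finset.sum_const, Finset.card_univ, Fintype.card_fin, nsmul_eq_mul]
      ring
    rw [hid]
    have hstep : ∑ k, ∑ l, ((∫ ω, Z k ω * Z l ω) - S ^ 2)
        ≤ ∑ k, ∑ l, ((∑ i ∈ D k l, g i) + (∑ j ∈ R k l, g j)) :=
      Finset.sum_le_sum fun k _ => Finset.sum_le_sum fun l _ => hpair k l
    have hsplit : ∑ k, ∑ l, ((∑ i ∈ D k l, g i) + (∑ j ∈ R k l, g j))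
        = (∑ k, ∑ l, ∑ i ∈ D k l, g i) + (∑ k, ∑ l, ∑ j ∈ R k l, g j) := by
      rw [← Finset.sum_add_distrib]
      exact Finset.sum_congr rfl fun k _ => Finset.sum_add_distrib
    have h2dn : (∑ k, ∑ l, ∑ i ∈ D k l, g i) + (∑ k, ∑ l, ∑ j ∈ R k l, g j)
        ≤ 2 * ((N:ℝ) * ((d:ℝ) * (1 - s))) := by linarith [hsum1, hsum2]
    have hγs : 2 * ((N:ℝ) * ((d:ℝ) * (1 - s))) ≤ 2 * (γ:ℝ) * (1 - s) := by
      have h1s : 0 ≤ 1 - s := by linarith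
      nlinarith [hγge, h1s]
    have hfinal : 2 * (γ:ℝ) * (1 - s) ≤ 2 * (γ:ℝ) * (1 - S) := by
      have : (0:ℝ) ≤ (γ:ℝ) := Nat.cast_nonneg _
      nlinarith [hSs]
    linarith [hstep, hsplit.le, hsplit.ge, h2dn, hγs, hfinal]
  rw [hEX, hEX2]
  have hN2 : (0:ℝ) < (N:ℝ) ^ 2 := pow_pos hNR 2
  calc (∑ k, ∑ l, ∫ ω, Z k ω * Z l ω) / (N:ℝ) ^ 2 - S ^ 2
      = ((∑ k, ∑ l, ∫ ω, Z k ω * Z l ω) - (N:ℝ) ^ 2 * S ^ 2) / (N:ℝ) ^ 2 := by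
        field_simp
    _ ≤ (2 * (γ:ℝ) * (1 - S)) / (N:ℝ) ^ 2 := by
        exact div_le_div_of_nonneg_right hmain hN2.le |>.trans_eq rfl
    _ = 2 * (γ:ℝ) / (N:ℝ) ^ 2 * (1 - S) := by ring
end

section
/- Schoenberg: for every α ∈ [0,2], every λ > 0, and every m, the m × m matrix W_α with entries W_α(i,j) = exp(−λ |i − j|^α) is positive semi-definite. -/
open Real MeasureTheory Set

namespace Schoenberg

variable {α : ℝ}

lemma one_sub_cos_le_half_sq (x : ℝ) : 1 - Real.cos x ≤ x ^ 2 / 2 := by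
  have h := Real.abs_sin_half x
  have hnn : 0 ≤ (1 - Real.cos x) / 2 := by
    have := Real.cos_le_one x; linarith
  have h2 : (1 - Real.cos x) / 2 = Real.sin (x / 2) ^ 2 := by
    rw [← sq_abs, h, sq_sqrt hnn]
  have h3 := Real.abs_sin_le_abs (x := x / 2)
  nlinarith [sq_abs (Real.sin (x / 2)), sq_abs (x / 2), abs_nonneg (x / 2),
    abs_nonneg (Real.sin (x / 2))]

variable {α : ℝ}

lemma ker_integrable (hα0 : 0 < α) (hα2 : α < 2) (t : ℝ) :
    IntegrableOn (fun u => (1 - Real.cos (t * u)) * u ^ (-1 - α)) (Ioi (0 : ℝ)) := by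
  have hmeas : AEStronglyMeasurable (fun u : ℝ => (1 - Real.cos (t * u)) * u ^ (-1 - α))
      (volume.restrict (Ioi (0:ℝ))) := by
    apply Measurable.aestronglyMeasurable
    fun_prop
  have hsub1 : Ioc (0:ℝ) 1 ⊆ Ioi 0 := fun u hu => hu.1
  have hsub2 : Ioi (1:ℝ) ⊆ Ioi 0 := Ioi_subset_Ioi zero_le_one
  have hsplit : Ioc (0:ℝ) 1 ∪ Ioi 1 = Ioi 0 := Ioc_union_Ioi_eq_Ioi zero_le_one
  rw [← hsplit]
  apply IntegrableOn.union
  · -- on Ioc 0 1, dominate by (t^2/2) * u^(1-α)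
    have hg : IntegrableOn (fun u : ℝ => t ^ 2 / 2 * u ^ (1 - α)) (Ioc (0:ℝ) 1) := by
      apply Integrable.const_mul
      exact (intervalIntegrable_iff_integrableOn_Ioc_of_le zero_le_one).mp
        (intervalIntegral.intervalIntegrable_rpow' (by linarith))
    refine Integrable.mono' hg (hmeas.mono_measure (Measure.restrict_mono hsub1 le_rfl)) ?_
    filter_upwards [ae_restrict_mem measurableSet_Ioc] with u hu
    have hu0 : 0 < u := hu.1
    have hb : 1 - Real.cos (t * u) ≤ (t * u) ^ 2 / 2 := one_sub_cos_le_half_sq _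
    have hb0 : 0 ≤ 1 - Real.cos (t * u) := by have := Real.cos_le_one (t * u); linarith
    have hr0 : (0:ℝ) ≤ u ^ (-1 - α) := (Real.rpow_pos_of_pos hu0 _).le
    rw [norm_mul, norm_of_nonneg hb0, norm_of_nonneg hr0]
    have key : u ^ (2:ℝ) * u ^ (-1 - α) = u ^ (1 - α) := by
      rw [← Real.rpow_add hu0]; congr 1; ring
    have key2 : u ^ (2:ℝ) = u ^ (2:ℕ) := by
      rw [show ((2:ℝ)) = ((2:ℕ):ℝ) by norm_num, Real.rpow_natCast]
    calc (1 - Real.cos (t * u)) * u ^ (-1 - α)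
        ≤ (t * u) ^ 2 / 2 * u ^ (-1 - α) := mul_le_mul_of_nonneg_right hb hr0
      _ = t ^ 2 / 2 * (u ^ (2:ℝ) * u ^ (-1 - α)) := by rw [key2]; ring
      _ = t ^ 2 / 2 * u ^ (1 - α) := by rw [key]
  · -- on Ioi 1, dominate by 2 * u^(-1-α)
    have hg : IntegrableOn (fun u : ℝ => 2 * u ^ (-1 - α)) (Ioi (1:ℝ)) :=
      (integrableOn_Ioi_rpow_of_lt (by linarith) one_pos).const_mul 2
    refine Integrable.mono' hg (hmeas.mono_measure (Measure.restrict_mono hsub2 le_rfl)) ?_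
    filter_upwards [ae_restrict_mem measurableSet_Ioi] with u hu
    have hu0 : (0:ℝ) < u := lt_trans one_pos hu
    have hb0 : 0 ≤ 1 - Real.cos (t * u) := by have := Real.cos_le_one (t * u); linarith
    have hb2 : 1 - Real.cos (t * u) ≤ 2 := by have := Real.neg_one_le_cos (t * u); linarith
    have hr0 : (0:ℝ) ≤ u ^ (-1 - α) := (Real.rpow_pos_of_pos hu0 _).le
    rw [norm_mul, norm_of_nonneg hb0, norm_of_nonneg hr0]
    exact mul_le_mul_of_nonneg_right hb2 hr0


noncomputable def c1 (α : ℝ) : ℝ := ∫ u in Ioi (0:ℝ), (1 - Real.cos u) * u ^ (-1 - α)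

lemma ker_integral (hα0 : 0 < α) (hα2 : α < 2) (t : ℝ) :
    ∫ u in Ioi (0:ℝ), (1 - Real.cos (t * u)) * u ^ (-1 - α) = |t| ^ α * c1 α := by
  rcases eq_or_ne t 0 with rfl | ht
  · simp [Real.zero_rpow hα0.ne', c1]
  · have hc : (0:ℝ) < |t| := abs_pos.mpr ht
    set g : ℝ → ℝ := fun v => (1 - Real.cos v) * v ^ (-1 - α) with hg
    have step1 : ∀ u ∈ Ioi (0:ℝ),
        (1 - Real.cos (t * u)) * u ^ (-1 - α) = |t| ^ (1 + α) * g (|t| * u) := by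
      intro u hu
      have hu0 : (0:ℝ) < u := hu
      have hcos : Real.cos (t * u) = Real.cos (|t| * u) := by
        rcases abs_cases t with ⟨h1, _⟩ | ⟨h1, _⟩
        · rw [h1]
        · rw [h1]; rw [neg_mul, Real.cos_neg]
      have hmul : (|t| * u) ^ (-1 - α) = |t| ^ (-1 - α) * u ^ (-1 - α) :=
        Real.mul_rpow hc.le hu0.le
      have hpow : |t| ^ (1 + α) * |t| ^ (-1 - α) = 1 := by
        rw [← Real.rpow_add hc]
        norm_num
      rw [hg]; dsimp only
      rw [hcos, hmul]
      rw [show |t| ^ (1 + α) * ((1 - Real.cos (|t| * u)) * (|t| ^ (-1 - α) * u ^ (-1 - α)))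
          = (1 - Real.cos (|t| * u)) * u ^ (-1 - α) * (|t| ^ (1 + α) * |t| ^ (-1 - α)) from by
        ring, hpow, mul_one]
    rw [setIntegral_congr_fun measurableSet_Ioi step1]
    rw [integral_const_mul]
    have := integral_comp_mul_left_Ioi g 0 hc
    rw [mul_zero] at this
    rw [this, smul_eq_mul]
    have : |t| ^ (1 + α) * (|t|⁻¹ * ∫ v in Ioi (0:ℝ), g v) = |t| ^ α * c1 α := by
      have h1 : |t|⁻¹ = |t| ^ (-1:ℝ) := by rw [Real.rpow_neg_one]
      have h2 : |t| ^ (1 + α) * |t| ^ (-1:ℝ) = |t| ^ α := by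
        rw [← Real.rpow_add hc]; congr 1; ring
      have h3 : (∫ v in Ioi (0:ℝ), g v) = c1 α := by
        rw [c1]
      rw [h1, ← mul_assoc, h2, h3]
    rw [← this]

lemma c1_pos (hα0 : 0 < α) (hα2 : α < 2) : 0 < c1 α := by
  have hint : IntegrableOn (fun u : ℝ => (1 - Real.cos u) * u ^ (-1 - α)) (Ioi 0) := by
    have := ker_integrable hα0 hα2 1
    simpa using this
  have hnn : 0 ≤ᵐ[volume.restrict (Ioi (0:ℝ))]
      fun u : ℝ => (1 - Real.cos u) * u ^ (-1 - α) := by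
    filter_upwards [ae_restrict_mem measurableSet_Ioi] with u hu
    have h1 := Real.cos_le_one u
    have h2 := Real.rpow_pos_of_pos (show (0:ℝ) < u from hu) (-1 - α)
    exact mul_nonneg (by linarith) h2.le
  have hsub : Ioc (1:ℝ) 3 ⊆ Ioi 0 := fun u hu => lt_trans one_pos hu.1
  have step1 : (∫ u in Ioc (1:ℝ) 3, (1 - Real.cos u) * u ^ (-1 - α)) ≤ c1 α := by
    rw [c1]
    refine setIntegral_mono_set hint hnn ?_
    exact HasSubset.Subset.eventuallyLE hsub
  have step2 : (1/3 * 3 ^ (-1 - α)) * (volume (Ioc (1:ℝ) 3)).toReal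
      ≤ ∫ u in Ioc (1:ℝ) 3, (1 - Real.cos u) * u ^ (-1 - α) := by
    refine setIntegral_ge_of_const_le_real measurableSet_Ioc (by simp) ?_ (hint.mono_set hsub)
    intro u hu
    have hu1 : (1:ℝ) ≤ u := hu.1.le
    have hu3 : u ≤ 3 := hu.2
    have hcos : Real.cos u ≤ Real.cos 1 := by
      apply Real.cos_le_cos_of_nonneg_of_le_pi zero_le_one
      · linarith [Real.pi_gt_three]
      · exact hu1
    have h13 : (1:ℝ)/3 ≤ 1 - Real.cos u := by
      have := Real.cos_one_le
      linarith
    have hr : (3:ℝ) ^ (-1 - α) ≤ u ^ (-1 - α) := by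
      apply Real.rpow_le_rpow_of_nonpos (by linarith) hu3 (by linarith)
    have hr0 : (0:ℝ) ≤ (3:ℝ) ^ (-1 - α) := (Real.rpow_pos_of_pos (by norm_num) _).le
    calc 1/3 * (3:ℝ) ^ (-1 - α) ≤ (1 - Real.cos u) * (3:ℝ) ^ (-1 - α) :=
          mul_le_mul_of_nonneg_right h13 hr0
      _ ≤ (1 - Real.cos u) * u ^ (-1 - α) := by
          apply mul_le_mul_of_nonneg_left hr
          have := Real.cos_le_one u; linarith
  have hvol : (volume (Ioc (1:ℝ) 3)).toReal = 2 := by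
    rw [Real.volume_Ioc]
    norm_num
  rw [hvol] at step2
  have h3 : (0:ℝ) < 3 ^ (-1 - α) := Real.rpow_pos_of_pos (by norm_num) _
  nlinarith


lemma sum_prod_mul {ι : Type*} [Fintype ι] (a b : ι → ℝ) :
    ∑ p : ι × ι, a p.1 * b p.2 = (∑ i, a i) * (∑ i, b i) := by
  rw [Fintype.sum_prod_type]
  simp_rw [← Finset.mul_sum]
  rw [← Finset.sum_mul]

lemma cnd {ι : Type*} [Fintype ι] (hα0 : 0 ≤ α) (hα2 : α ≤ 2) (x z : ι → ℝ)
    (hz : ∑ i, z i = 0) :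
    ∑ p : ι × ι, z p.1 * z p.2 * |x p.1 - x p.2| ^ α ≤ 0 := by
  rcases eq_or_lt_of_le hα0 with rfl | hα0'
  · -- α = 0
    have : ∀ p : ι × ι, z p.1 * z p.2 * |x p.1 - x p.2| ^ (0:ℝ) = z p.1 * z p.2 := by
      intro p; rw [Real.rpow_zero, mul_one]
    rw [Finset.sum_congr rfl fun p _ => this p, sum_prod_mul z z, hz, mul_zero]
  rcases eq_or_lt_of_le hα2 with rfl | hα2'
  · -- α = 2
    have h2 : ∀ p : ι × ι, z p.1 * z p.2 * |x p.1 - x p.2| ^ (2:ℝ)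
        = z p.1 * z p.2 * (x p.1)^2 + z p.1 * z p.2 * (x p.2)^2
          - 2 * ((z p.1 * x p.1) * (z p.2 * x p.2)) := by
      intro p
      rw [show ((2:ℝ)) = ((2:ℕ):ℝ) by norm_num, Real.rpow_natCast, sq_abs]
      ring
    rw [Finset.sum_congr rfl fun p _ => h2 p]
    rw [Finset.sum_sub_distrib, Finset.sum_add_distrib]
    have e1 : ∑ p : ι × ι, z p.1 * z p.2 * (x p.1)^2
        = (∑ i, z i * (x i)^2) * (∑ i, z i) := by
      rw [← sum_prod_mul (fun i => z i * (x i)^2) z]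
      exact Finset.sum_congr rfl fun p _ => by ring
    have e2 : ∑ p : ι × ι, z p.1 * z p.2 * (x p.2)^2
        = (∑ i, z i) * (∑ i, z i * (x i)^2) := by
      rw [← sum_prod_mul z (fun i => z i * (x i)^2)]
      exact Finset.sum_congr rfl fun p _ => by ring
    have e3 : ∑ p : ι × ι, 2 * ((z p.1 * x p.1) * (z p.2 * x p.2))
        = 2 * ((∑ i, z i * x i) * (∑ i, z i * x i)) := by
      rw [← Finset.mul_sum, ← sum_prod_mul (fun i => z i * x i) (fun i => z i * x i)]
    rw [e1, e2, e3, hz]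
    nlinarith [sq_nonneg (∑ i, z i * x i)]
  · -- 0 < α < 2
    have hc1 := c1_pos hα0' hα2'
    have hint : ∀ p : ι × ι, Integrable
        (fun u => z p.1 * z p.2 * ((1 - Real.cos ((x p.1 - x p.2) * u)) * u ^ (-1 - α)))
        (volume.restrict (Ioi (0:ℝ))) :=
      fun p => (ker_integrable hα0' hα2' _).const_mul _
    have key : (∑ p : ι × ι, z p.1 * z p.2 * |x p.1 - x p.2| ^ α) * c1 α
        = ∫ u in Ioi (0:ℝ), ∑ p : ι × ι,
            z p.1 * z p.2 * ((1 - Real.cos ((x p.1 - x p.2) * u)) * u ^ (-1 - α)) := by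
      rw [integral_finset_sum _ (fun p _ => hint p)]
      rw [Finset.sum_mul]
      refine Finset.sum_congr rfl fun p _ => ?_
      rw [integral_const_mul, ker_integral hα0' hα2']
      ring
    have hpt : ∀ u ∈ Ioi (0:ℝ), (∑ p : ι × ι,
        z p.1 * z p.2 * ((1 - Real.cos ((x p.1 - x p.2) * u)) * u ^ (-1 - α))) ≤ 0 := by
      intro u hu
      have hu0 : (0:ℝ) < u := hu
      have hr0 : (0:ℝ) ≤ u ^ (-1 - α) := (Real.rpow_pos_of_pos hu0 _).le
      have expand : ∀ p : ι × ι,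
          z p.1 * z p.2 * ((1 - Real.cos ((x p.1 - x p.2) * u)) * u ^ (-1 - α))
          = (z p.1 * z p.2
            - ((z p.1 * Real.cos (x p.1 * u)) * (z p.2 * Real.cos (x p.2 * u))
              + (z p.1 * Real.sin (x p.1 * u)) * (z p.2 * Real.sin (x p.2 * u))))
            * u ^ (-1 - α) := by
        intro p
        rw [show (x p.1 - x p.2) * u = x p.1 * u - x p.2 * u from by ring, Real.cos_sub]
        ring
      rw [Finset.sum_congr rfl fun p _ => expand p, ← Finset.sum_mul]
      have hsum : (∑ p : ι × ι, (z p.1 * z p.2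
            - ((z p.1 * Real.cos (x p.1 * u)) * (z p.2 * Real.cos (x p.2 * u))
              + (z p.1 * Real.sin (x p.1 * u)) * (z p.2 * Real.sin (x p.2 * u)))))
          = - ((∑ i, z i * Real.cos (x i * u))^2 + (∑ i, z i * Real.sin (x i * u))^2) := by
        rw [Finset.sum_sub_distrib, Finset.sum_add_distrib,
          sum_prod_mul z z,
          sum_prod_mul (fun i => z i * Real.cos (x i * u)) (fun i => z i * Real.cos (x i * u)),
          sum_prod_mul (fun i => z i * Real.sin (x i * u)) (fun i => z i * Real.sin (x i * u)),
          hz]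
        ring
      rw [hsum]
      have hC := sq_nonneg (∑ i, z i * Real.cos (x i * u))
      have hS := sq_nonneg (∑ i, z i * Real.sin (x i * u))
      nlinarith
    have hle : (∑ p : ι × ι, z p.1 * z p.2 * |x p.1 - x p.2| ^ α) * c1 α ≤ 0 := by
      rw [key]
      apply integral_nonpos_of_ae
      exact (ae_restrict_iff' measurableSet_Ioi).mpr (ae_of_all _ hpt)
    nlinarith


/-- The Gram-type kernel is positive semidefinite (quadratic form version). -/
lemma qK_nonneg (hα0 : 0 ≤ α) (hα2 : α ≤ 2) {ι : Type*} [Fintype ι] (x z : ι → ℝ) :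
    0 ≤ ∑ p : ι × ι, z p.1 * z p.2 * (|x p.1| ^ α + |x p.2| ^ α - |x p.1 - x p.2| ^ α) := by
  rcases eq_or_lt_of_le hα0 with rfl | hα0'
  · have : ∀ p : ι × ι, z p.1 * z p.2 * (|x p.1| ^ (0:ℝ) + |x p.2| ^ (0:ℝ)
        - |x p.1 - x p.2| ^ (0:ℝ)) = z p.1 * z p.2 := by
      intro p; simp [Real.rpow_zero]
    rw [Finset.sum_congr rfl fun p _ => this p, sum_prod_mul z z]
    exact mul_self_nonneg _
  · -- 0 < α : use the Option extension
    set S := ∑ i, z i with hS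
    set A := ∑ p : ι × ι, z p.1 * z p.2 * |x p.1 - x p.2| ^ α with hA
    set B := ∑ i, z i * |x i| ^ α with hB
    set x' : Option ι → ℝ := fun o => o.elim 0 x with hx'
    set z' : Option ι → ℝ := fun o => o.elim (-S) z with hz'
    have hzsum : ∑ o : Option ι, z' o = 0 := by
      rw [Fintype.sum_option]
      simp [hz', hS]
    have hcnd := cnd hα0 hα2 x' z' hzsum
    have h0 : |(0:ℝ)| ^ α = 0 := by rw [abs_zero, Real.zero_rpow hα0'.ne']
    -- expand the Option × Option sum
    have hexp : ∑ p : Option ι × Option ι, z' p.1 * z' p.2 * |x' p.1 - x' p.2| ^ α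
        = A - S * B - B * S := by
      rw [Fintype.sum_prod_type, Fintype.sum_option]
      have inner_none : ∑ q : Option ι, z' none * z' q * |x' none - x' q| ^ α
          = -(S * B) := by
        rw [Fintype.sum_option]
        have e0 : z' none * z' none * |x' none - x' none| ^ α = 0 := by
          simp only [hz', hx', Option.elim, sub_self, h0]
          ring
        have e1 : ∀ i, z' none * z' (some i) * |x' none - x' (some i)| ^ α
            = -(S * (z i * |x i| ^ α)) := by
          intro i
          simp only [hz', hx', Option.elim]
          rw [zero_sub, abs_neg]; ring
        rw [e0, Finset.sum_congr rfl fun i _ => e1 i, Finset.sum_neg_distrib,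
          ← Finset.mul_sum, ← hB, zero_add]
      have inner_some : ∀ i, ∑ q : Option ι, z' (some i) * z' q * |x' (some i) - x' q| ^ α
          = -(z i * |x i| ^ α * S) + ∑ j, z i * z j * |x i - x j| ^ α := by
        intro i
        rw [Fintype.sum_option]
        simp only [hz', hx', Option.elim]
        congr 1
        rw [sub_zero]
        ring
      rw [inner_none, Finset.sum_congr rfl fun i _ => inner_some i,
        Finset.sum_add_distrib, Finset.sum_neg_distrib, ← Finset.sum_mul, ← hB]
      have hAA : ∑ i, ∑ j, z i * z j * |x i - x j| ^ α = A := by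
        rw [hA, Fintype.sum_prod_type]
      rw [hAA]
      ring
    rw [hexp] at hcnd
    have hexpand : ∀ p : ι × ι, z p.1 * z p.2 * (|x p.1| ^ α + |x p.2| ^ α
        - |x p.1 - x p.2| ^ α)
        = (z p.1 * |x p.1| ^ α) * z p.2 + z p.1 * (z p.2 * |x p.2| ^ α)
          - z p.1 * z p.2 * |x p.1 - x p.2| ^ α := by
      intro p; ring
    rw [Finset.sum_congr rfl fun p _ => hexpand p, Finset.sum_sub_distrib,
      Finset.sum_add_distrib, sum_prod_mul (fun i => z i * |x i| ^ α) z,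
      sum_prod_mul z (fun i => z i * |x i| ^ α)]
    rw [← hS, ← hB, ← hA]
    linarith

/-- Schur product theorem, quadratic form version. -/
lemma schur {ι : Type*} [Fintype ι] [DecidableEq ι] (M N : ι → ι → ℝ)
    (hMsym : ∀ i j, M i j = M j i)
    (hM : ∀ z : ι → ℝ, 0 ≤ ∑ p : ι × ι, z p.1 * z p.2 * M p.1 p.2)
    (hN : ∀ z : ι → ℝ, 0 ≤ ∑ p : ι × ι, z p.1 * z p.2 * N p.1 p.2) (z : ι → ℝ) :
    0 ≤ ∑ p : ι × ι, z p.1 * z p.2 * (M p.1 p.2 * N p.1 p.2) := by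
  have hdot : ∀ v : ι → ℝ, dotProduct (star v) ((Matrix.of M).mulVec v)
      = ∑ p : ι × ι, v p.1 * v p.2 * M p.1 p.2 := by
    intro v
    rw [Fintype.sum_prod_type]
    simp only [dotProduct, Matrix.mulVec, Pi.star_apply, star_trivial,
      Matrix.of_apply, Finset.mul_sum]
    refine Finset.sum_congr rfl fun i _ => Finset.sum_congr rfl fun j _ => by ring
  have hpsd : (Matrix.of M).PosSemidef := by
    refine Matrix.PosSemidef.of_dotProduct_mulVec_nonneg ?_ fun v => ?_
    · ext i j
      simp [Matrix.conjTranspose_apply, hMsym j i]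
    · rw [hdot v]
      exact hM v
  obtain ⟨mm, vv, hvv⟩ := Matrix.posSemidef_iff_eq_sum_vecMulVec.mp hpsd
  obtain ⟨B, hB⟩ : ∃ B : Matrix (Fin mm) ι ℝ, Matrix.of M = B.conjTranspose * B := by
    refine ⟨Matrix.of vv, ?_⟩
    rw [hvv]; ext i j
    simp [Matrix.mul_apply, Matrix.sum_apply, Matrix.vecMulVec_apply]
  have hMentry : ∀ i j, M i j = ∑ k, B k i * B k j := by
    intro i j
    have h : (Matrix.of M) i j = (B.conjTranspose * B) i j := by rw [hB]
    simpa [Matrix.mul_apply, Matrix.conjTranspose_apply, Matrix.of_apply] using h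
  have expand : ∀ p : ι × ι, z p.1 * z p.2 * (M p.1 p.2 * N p.1 p.2)
      = ∑ k, (z p.1 * B k p.1) * (z p.2 * B k p.2) * N p.1 p.2 := by
    intro p
    rw [hMentry p.1 p.2, Finset.sum_mul, Finset.mul_sum]
    refine Finset.sum_congr rfl fun k _ => by ring
  rw [Finset.sum_congr rfl fun p _ => expand p, Finset.sum_comm]
  exact Finset.sum_nonneg fun k _ => hN (fun i => z i * B k i)

/-- Hadamard powers preserve PSD (quadratic form version). -/
lemma pow_q {ι : Type*} [Fintype ι] [DecidableEq ι] (M : ι → ι → ℝ)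
    (hMsym : ∀ i j, M i j = M j i)
    (hM : ∀ z : ι → ℝ, 0 ≤ ∑ p : ι × ι, z p.1 * z p.2 * M p.1 p.2) (n : ℕ) :
    ∀ z : ι → ℝ, 0 ≤ ∑ p : ι × ι, z p.1 * z p.2 * M p.1 p.2 ^ n := by
  induction n with
  | zero =>
    intro z
    simp only [pow_zero, mul_one]
    rw [sum_prod_mul z z]
    exact mul_self_nonneg _
  | succ n ih =>
    intro z
    have : ∀ p : ι × ι, z p.1 * z p.2 * M p.1 p.2 ^ (n+1)
        = z p.1 * z p.2 * (M p.1 p.2 * M p.1 p.2 ^ n) := by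
      intro p; ring
    rw [Finset.sum_congr rfl fun p _ => this p]
    exact schur M (fun i j => M i j ^ n) hMsym hM ih z

/-- Entrywise exponential preserves PSD (quadratic form version). -/
lemma exp_q {ι : Type*} [Fintype ι] [DecidableEq ι] (M : ι → ι → ℝ)
    (hMsym : ∀ i j, M i j = M j i)
    (hM : ∀ z : ι → ℝ, 0 ≤ ∑ p : ι × ι, z p.1 * z p.2 * M p.1 p.2) (z : ι → ℝ) :
    0 ≤ ∑ p : ι × ι, z p.1 * z p.2 * Real.exp (M p.1 p.2) := by
  have hexp : ∀ p : ι × ι, z p.1 * z p.2 * Real.exp (M p.1 p.2)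
      = ∑' n : ℕ, z p.1 * z p.2 * (M p.1 p.2 ^ n / n.factorial) := by
    intro p
    rw [Real.exp_eq_exp_ℝ, NormedSpace.exp_eq_tsum_div, ← tsum_mul_left]
  have hsummable : ∀ p : ι × ι,
      Summable (fun n : ℕ => z p.1 * z p.2 * (M p.1 p.2 ^ n / n.factorial)) :=
    fun p => (Real.summable_pow_div_factorial _).mul_left _
  rw [Finset.sum_congr rfl fun p _ => hexp p]
  rw [← Summable.tsum_finsetSum (fun p _ => hsummable p)]
  apply tsum_nonneg
  intro n
  have : ∀ p : ι × ι, z p.1 * z p.2 * (M p.1 p.2 ^ n / n.factorial)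
      = (z p.1 * z p.2 * M p.1 p.2 ^ n) * (1 / n.factorial) := by
    intro p; ring
  rw [Finset.sum_congr rfl fun p _ => this p, ← Finset.sum_mul]
  apply mul_nonneg (pow_q M hMsym hM n z)
  positivity


lemma main_q {ι : Type*} [Fintype ι] [DecidableEq ι] (hα0 : 0 ≤ α) (hα2 : α ≤ 2)
    {lam : ℝ} (hlam : 0 < lam) (x v : ι → ℝ) :
    0 ≤ ∑ p : ι × ι, v p.1 * v p.2 * Real.exp (-lam * |x p.1 - x p.2| ^ α) := by
  rcases eq_or_lt_of_le hα0 with rfl | hα0'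
  · have : ∀ p : ι × ι, v p.1 * v p.2 * Real.exp (-lam * |x p.1 - x p.2| ^ (0:ℝ))
        = (v p.1 * Real.exp (-lam / 2)) * (v p.2 * Real.exp (-lam / 2)) := by
      intro p
      rw [Real.rpow_zero, mul_one]
      rw [show -lam = -lam/2 + -lam/2 from by ring, Real.exp_add]
      ring
    rw [Finset.sum_congr rfl fun p _ => this p,
      sum_prod_mul (fun i => v i * Real.exp (-lam / 2)) (fun i => v i * Real.exp (-lam / 2))]
    exact mul_self_nonneg _
  · set a : ι → ℝ := fun i => Real.exp (-lam * |x i| ^ α) with ha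
    set K : ι → ι → ℝ := fun i j => lam * (|x i| ^ α + |x j| ^ α - |x i - x j| ^ α) with hK
    have hterm : ∀ p : ι × ι, v p.1 * v p.2 * Real.exp (-lam * |x p.1 - x p.2| ^ α)
        = (v p.1 * a p.1) * (v p.2 * a p.2) * Real.exp (K p.1 p.2) := by
      intro p
      rw [ha, hK]
      dsimp only
      rw [show -lam * |x p.1 - x p.2| ^ α
          = (-lam * |x p.1| ^ α) + ((-lam * |x p.2| ^ α)
            + lam * (|x p.1| ^ α + |x p.2| ^ α - |x p.1 - x p.2| ^ α)) from by ring,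
        Real.exp_add, Real.exp_add]
      ring
    rw [Finset.sum_congr rfl fun p _ => hterm p]
    have hsym : ∀ i j, K i j = K j i := by
      intro i j
      rw [hK]; dsimp only
      rw [abs_sub_comm]; ring
    have hq : ∀ z : ι → ℝ, 0 ≤ ∑ p : ι × ι, z p.1 * z p.2 * K p.1 p.2 := by
      intro z
      have : ∀ p : ι × ι, z p.1 * z p.2 * K p.1 p.2
          = lam * (z p.1 * z p.2 * (|x p.1| ^ α + |x p.2| ^ α - |x p.1 - x p.2| ^ α)) := by
        intro p; rw [hK]; dsimp only; ring
      rw [Finset.sum_congr rfl fun p _ => this p, ← Finset.mul_sum]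
      exact mul_nonneg hlam.le (qK_nonneg hα0 hα2 x z)
    exact exp_q K hsym hq (fun i => v i * a i)

end Schoenberg

open Real

/-- Schoenberg: for `α ∈ [0,2]`, `λ > 0`, the `m × m` matrix with entries
`exp(-λ |i-j|^α)` is positive semi-definite. -/
theorem schoenberg_psd (α lam : ℝ) (hα0 : 0 ≤ α) (hα2 : α ≤ 2) (hlam : 0 < lam) (m : ℕ) :
    (Matrix.of fun i j : Fin m =>
      Real.exp (-lam * |(i : ℝ) - (j : ℝ)| ^ α)).PosSemidef := by
  refine Matrix.PosSemidef.of_dotProduct_mulVec_nonneg ?_ ?_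
  · ext i j
    simp only [Matrix.conjTranspose_apply, Matrix.of_apply, star_trivial]
    rw [abs_sub_comm]
  · intro v
    have hdot : dotProduct (star v) ((Matrix.of fun i j : Fin m =>
        Real.exp (-lam * |(i : ℝ) - (j : ℝ)| ^ α)).mulVec v)
        = ∑ p : Fin m × Fin m,
            v p.1 * v p.2 * Real.exp (-lam * |((p.1 : ℕ) : ℝ) - ((p.2 : ℕ) : ℝ)| ^ α) := by
      rw [Fintype.sum_prod_type]
      simp only [dotProduct, Matrix.mulVec, Pi.star_apply, star_trivial,
        Matrix.of_apply, Finset.mul_sum]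
      refine Finset.sum_congr rfl fun i _ => Finset.sum_congr rfl fun j _ => by ring
    rw [hdot]
    exact Schoenberg.main_q hα0 hα2 hlam (fun i : Fin m => ((i : ℕ) : ℝ)) v
end

section
/- As x → 0⁺, (2/π) arcsin(exp(−x²)) = 1 − (2√2/π) x + O(x³). -/
open Real

private lemma exp_neg_le_aux (u : ℝ) (hu : 0 ≤ u) : Real.exp (-u) ≤ 1 - u + u ^ 2 := by
  have h1 : 1 + u ≤ Real.exp u := by linarith [Real.add_one_le_exp u]
  have hpos : (0:ℝ) < 1 + u := by linarith
  have h2 : Real.exp (-u) ≤ (1 + u)⁻¹ := by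
    rw [Real.exp_neg]
    exact inv_anti₀ hpos h1
  have h3 : (1 + u)⁻¹ ≤ 1 - u + u ^ 2 := by
    rw [inv_le_iff_one_le_mul₀ hpos]
    nlinarith
  linarith

set_option maxHeartbeats 1600000 in
/-- As `x → 0⁺`, `(2/π) arcsin(exp(-x²)) = 1 - (2√2/π) x + O(x³)`. -/
theorem arcsin_exp_expansion :
    ∃ C δ : ℝ, 0 < C ∧ 0 < δ ∧ ∀ x : ℝ, 0 < x → x < δ →
      |2 / π * Real.arcsin (Real.exp (-x ^ 2)) - (1 - 2 * Real.sqrt 2 / π * x)| ≤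
        C * x ^ 3 := by
  refine ⟨1, 1/2, one_pos, by norm_num, fun x hx hδ => ?_⟩
  have hπ : (0:ℝ) < π := Real.pi_pos
  have hπ3 : (3:ℝ) < π := Real.pi_gt_three
  obtain ⟨s, hs⟩ : ∃ s, s = Real.sqrt 2 := ⟨_, rfl⟩
  rw [← hs]
  have hs2 : s ^ 2 = 2 := by rw [hs]; exact Real.sq_sqrt (by norm_num)
  have hs0 : 0 ≤ s := hs ▸ Real.sqrt_nonneg 2
  have hsl : (1.41:ℝ) ≤ s := by nlinarith
  have hsu : s ≤ 1.42 := by nlinarith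
  obtain ⟨y, hy⟩ : ∃ y, y = Real.exp (-x ^ 2) := ⟨_, rfl⟩
  rw [← hy]
  have hy1 : 1 - x ^ 2 ≤ y := by
    have := Real.add_one_le_exp (-x ^ 2); rw [hy]; linarith
  have hy2 : y ≤ 1 - x ^ 2 + x ^ 4 := by
    have := exp_neg_le_aux (x ^ 2) (by positivity)
    calc y ≤ 1 - x ^ 2 + (x ^ 2) ^ 2 := hy ▸ this
    _ = 1 - x ^ 2 + x ^ 4 := by ring
  have hypos : 0 < y := hy ▸ Real.exp_pos _
  obtain ⟨a, ha⟩ : ∃ a, a = s * x - x ^ 3 := ⟨_, rfl⟩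
  obtain ⟨b, hb⟩ : ∃ b, b = s * x + x ^ 3 := ⟨_, rfl⟩
  have ha0 : 0 ≤ a := by nlinarith
  have hb1 : b ≤ 1 := by nlinarith
  have ha1 : a ≤ 1 := by nlinarith
  have hb0 : 0 ≤ b := by nlinarith
  -- cos bounds
  have hca := Real.cos_bound (x := a) (by rw [abs_of_nonneg ha0]; exact ha1)
  have hcb := Real.cos_bound (x := b) (by rw [abs_of_nonneg hb0]; exact hb1)
  rw [abs_of_nonneg ha0] at hca
  rw [abs_of_nonneg hb0] at hcb
  rw [abs_le] at hca hcb
  have hx2 : x ^ 2 ≤ 1/4 := by nlinarith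
  have hx6 : x ^ 6 ≤ x ^ 4 / 4 := by nlinarith
  have hx40 : (0:ℝ) ≤ x ^ 4 := by positivity
  have hx60 : (0:ℝ) ≤ x ^ 6 := by positivity
  have hsx4 : 1.41 * x ^ 4 ≤ s * x ^ 4 := mul_le_mul_of_nonneg_right hsl hx40
  have hsx4' : s * x ^ 4 ≤ 1.42 * x ^ 4 := mul_le_mul_of_nonneg_right hsu hx40
  have haa : a ^ 2 = 2 * x ^ 2 - 2 * (s * x ^ 4) + x ^ 6 := by
    rw [ha]; linear_combination x ^ 2 * hs2
  have hbb : b ^ 2 = 2 * x ^ 2 + 2 * (s * x ^ 4) + x ^ 6 := by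
    rw [hb]; linear_combination x ^ 2 * hs2
  have ha2' : a ^ 2 ≤ 2 * x ^ 2 := by linarith
  have ha4 : a ^ 4 ≤ 4 * x ^ 4 := by
    have h := pow_le_pow_left₀ (sq_nonneg a) ha2' 2
    calc a ^ 4 = (a ^ 2) ^ 2 := by ring
    _ ≤ (2 * x ^ 2) ^ 2 := h
    _ = 4 * x ^ 4 := by ring
  have hx3 : x ^ 3 ≤ 0.25 * x := by
    have h := mul_le_mul_of_nonneg_left hx2 hx.le
    calc x ^ 3 = x * x ^ 2 := by ring
    _ ≤ x * (1/4) := h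
    _ = 0.25 * x := by ring
  have hsx : s * x ≤ 1.42 * x := mul_le_mul_of_nonneg_right hsu hx.le
  have hble : b ≤ 1.7 * x := by rw [hb]; linarith
  have hb4 : b ^ 4 ≤ 8.36 * x ^ 4 := by
    have h := pow_le_pow_left₀ hb0 hble 4
    calc b ^ 4 ≤ (1.7 * x) ^ 4 := h
    _ = 8.3521 * x ^ 4 := by ring
    _ ≤ 8.36 * x ^ 4 := by linarith
  -- cos a ≥ y
  have h1 : y ≤ Real.cos a := by
    linarith [hca.1, haa, ha4, hsx4, hx6, hy2, hx40]
  -- cos b ≤ y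
  have h2 : Real.cos b ≤ y := by
    linarith [hcb.2, hbb, hb4, hsx4, hx60, hx40, hy1]
  -- arccos bounds
  have haπ : a ≤ π := by linarith
  have hbπ : b ≤ π := by linarith
  have harc1 : a ≤ Real.arccos y := by
    have := monotone_arcsin h1
    have h := Real.arccos_cos ha0 haπ
    rw [Real.arccos_eq_pi_div_two_sub_arcsin] at h ⊢
    linarith
  have harc2 : Real.arccos y ≤ b := by
    have := monotone_arcsin h2
    have h := Real.arccos_cos hb0 hbπ
    rw [Real.arccos_eq_pi_div_two_sub_arcsin] at h ⊢
    linarith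
  have key : |s * x - Real.arccos y| ≤ x ^ 3 := by
    rw [abs_le]; constructor <;> [linarith; linarith]
  have heq : 2 / π * Real.arcsin y - (1 - 2 * s / π * x)
      = 2 / π * (s * x - Real.arccos y) := by
    rw [Real.arcsin_eq_pi_div_two_sub_arccos]
    field_simp
    ring
  rw [heq, abs_mul, abs_of_pos (by positivity : (0:ℝ) < 2 / π)]
  have h2π : 2 / π ≤ 1 := by
    rw [div_le_one hπ]; linarith
  calc 2 / π * |s * x - Real.arccos y| ≤ 1 * (x ^ 3) := by
        apply mul_le_mul h2π key (abs_nonneg _) one_pos.le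
  _ = 1 * x ^ 3 := by ring
end
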